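/- For k ≥ 1 and n > m > 1, the number of m-element subsets of Z/nZ (the integers {1,...,n} arranged on a circle) such that the circular distance between any two distinct chosen elements is at least k equals C(n-k+1-(k-1)(m-1), m) + (k-1)·C(n-2k+1-(k-1)(m-2), m-1), provided n ≥ km. -/
import Mathlib

open Finset


private lemma choose_id (N m k : ℕ) (hN : 1 ≤ N) (hk : 1 ≤ k) :
    (N - (k-1)*m).choose (m+1)
      = (N - 1 - (k-1)*m).choose (m+1) + (N - k - (k-1)*(m-1)).choose m := by
  obtain ⟨k, rfl⟩ : ∃ k', k = k' + 1 := ⟨k - 1, by omega⟩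
  simp only [Nat.add_sub_cancel]
  cases m with
  | zero =>
    simp [Nat.choose_one_right]
    omega
  | succ m =>
    have h : N - (k+1) - k*(m+1-1) = N - 1 - k*(m+1) := by
      simp only [Nat.add_sub_cancel, Nat.mul_succ]
      generalize k * m = t
      omega
    rw [h]
    by_cases h2 : 1 + k*(m+1) ≤ N
    · have h3 : N - k*(m+1) = (N - 1 - k*(m+1)) + 1 := by
        generalize k * (m+1) = t at *
        omega
      rw [h3, Nat.choose_succ_succ]
      simp only [Nat.succ_eq_add_one]
      omega
    · have h4 : N - k*(m+1) = 0 := by generalize k*(m+1) = t at *; omega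
      have h5 : N - 1 - k*(m+1) = 0 := by generalize k*(m+1) = t at *; omega
      rw [h4, h5]
      simp [Nat.choose_eq_zero_of_lt]


private lemma linCount (k : ℕ) (hk : 1 ≤ k) (c N m : ℕ) :
    ((Finset.Icc (c+1) (c+N)).powerset.filter
      (fun S => S.card = m ∧ ∀ a ∈ S, ∀ b ∈ S, a < b → a + k ≤ b)).card
      = (N - (k-1)*(m-1)).choose m := by
  induction N using Nat.strong_induction_on generalizing m with
  | _ N IH =>
  cases m with
  | zero =>
    have h : ((Finset.Icc (c+1) (c+N)).powerset.filter
      (fun S => S.card = 0 ∧ ∀ a ∈ S, ∀ b ∈ S, a < b → a + k ≤ b)) = {∅} := by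
      ext S
      simp only [mem_filter, mem_powerset, mem_singleton, Finset.card_eq_zero]
      constructor
      · rintro ⟨-, h, -⟩; exact h
      · rintro rfl
        simp
    rw [h]
    simp
  | succ m =>
  rcases Nat.eq_zero_or_pos N with rfl | hN
  · have h : ((Finset.Icc (c+1) (c+0)).powerset.filter
      (fun S => S.card = m+1 ∧ ∀ a ∈ S, ∀ b ∈ S, a < b → a + k ≤ b)) = ∅ := by
      ext S
      simp only [mem_filter, mem_powerset, notMem_empty, iff_false]
      rintro ⟨hS, hc, -⟩
      have : S = ∅ := by
        rw [← Finset.subset_empty]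
        intro x hx
        have := hS hx
        simp only [mem_Icc] at this
        omega
      rw [this] at hc
      simp at hc
    rw [h]
    simp [Nat.choose_eq_zero_of_lt]
  · -- N ≥ 1
    set P : Finset ℕ → Prop := fun S => S.card = m+1 ∧ ∀ a ∈ S, ∀ b ∈ S, a < b → a + k ≤ b with hP
    have hsplit := Finset.card_filter_add_card_filter_not
      (s := (Finset.Icc (c+1) (c+N)).powerset.filter P) (p := fun S => c + N ∈ S)
    -- piece without c+N
    have hnot : ((Finset.Icc (c+1) (c+N)).powerset.filter P).filter (fun S => ¬ (c + N ∈ S))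
        = (Finset.Icc (c+1) (c+(N-1))).powerset.filter P := by
      rw [Finset.filter_filter]
      ext S
      simp only [mem_filter, mem_powerset]
      constructor
      · rintro ⟨hS, hPS, hn⟩
        refine ⟨?_, hPS⟩
        intro x hx
        have := hS hx
        simp only [mem_Icc] at this ⊢
        have : x ≠ c + N := fun h => hn (h ▸ hx)
        have h2 := hS hx
        simp only [mem_Icc] at h2
        omega
      · rintro ⟨hS, hPS⟩
        have hn : c + N ∉ S := by
          intro h
          have := hS h
          simp only [mem_Icc] at this
          omega
        refine ⟨?_, hPS, hn⟩
        intro x hx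
        have := hS hx
        simp only [mem_Icc] at this ⊢
        omega
    -- piece with c+N : bijection with subsets of Icc (c+1) (c+(N-k))
    have hmem : (((Finset.Icc (c+1) (c+N)).powerset.filter P).filter (fun S => c + N ∈ S)).card
        = ((Finset.Icc (c+1) (c+(N-k))).powerset.filter
            (fun S => S.card = m ∧ ∀ a ∈ S, ∀ b ∈ S, a < b → a + k ≤ b)).card := by
      refine Finset.card_bij' (fun S _ => S.erase (c+N)) (fun T _ => insert (c+N) T) ?hi ?hj ?left ?right
      case hi =>
        intro S hS
        simp only [mem_filter, mem_powerset, hP] at hS ⊢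
        obtain ⟨⟨hsub, hcard, hgap⟩, hmemN⟩ := hS
        refine ⟨?_, ?_, ?_⟩
        · intro x hx
          have hxS := Finset.mem_of_mem_erase hx
          have hxne := Finset.ne_of_mem_erase hx
          have h1 := hsub hxS
          simp only [mem_Icc] at h1 ⊢
          have h2 : x + k ≤ c + N := hgap x hxS (c+N) hmemN (by omega)
          omega
        · rw [Finset.card_erase_of_mem hmemN, hcard]
          omega
        · intro a ha b hb hab
          exact hgap a (Finset.mem_of_mem_erase ha) b (Finset.mem_of_mem_erase hb) hab
      case hj =>
        intro T hT
        simp only [mem_filter, mem_powerset, hP] at hT ⊢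
        obtain ⟨hsub, hcard, hgap⟩ := hT
        have hnotin : c + N ∉ T := by
          intro h
          have := hsub h
          simp only [mem_Icc] at this
          omega
        refine ⟨⟨?_, ?_, ?_⟩, ?_⟩
        · intro x hx
          rcases Finset.mem_insert.1 hx with rfl | hx
          · simp only [mem_Icc]; omega
          · have := hsub hx
            simp only [mem_Icc] at this ⊢
            omega
        · rw [Finset.card_insert_of_notMem hnotin, hcard]
        · intro a ha b hb hab
          rcases Finset.mem_insert.1 ha with rfl | ha
          · rcases Finset.mem_insert.1 hb with rfl | hb
            · omega
            · have := hsub hb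
              simp only [mem_Icc] at this
              omega
          · rcases Finset.mem_insert.1 hb with rfl | hb
            · have := hsub ha
              simp only [mem_Icc] at this
              omega
            · exact hgap a ha b hb hab
        · exact Finset.mem_insert_self _ _
      case left =>
        intro S hS
        simp only [mem_filter] at hS
        exact Finset.insert_erase hS.2
      case right =>
        intro T hT
        simp only [mem_filter, mem_powerset] at hT
        have hnotin : c + N ∉ T := by
          intro h
          have := hT.1 h
          simp only [mem_Icc] at this
          omega
        exact Finset.erase_insert hnotin
    rw [← hsplit, hnot, hmem, IH (N-1) (by omega) (m+1), IH (N-k) (by omega) m]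
    simp only [Nat.add_sub_cancel]
    have := choose_id N m k hN hk
    omega

/-- For k ≥ 1, n > m > 1 and n ≥ km, the number of m-element subsets of
{1,...,n} arranged on a circle whose circular distance between any two
distinct elements is at least k equals
C(n-k+1-(k-1)(m-1), m) + (k-1)·C(n-2k+1-(k-1)(m-2), m-1). -/
theorem count_circular_min_gap (n m k : ℕ) (hk : 1 ≤ k) (hm : 1 < m)
    (hmn : m < n) (hkm : k * m ≤ n) :
    (((Finset.Icc 1 n).powerset.filter
      (fun S => S.card = m ∧
        ∀ a : ℕ, a ∈ S → ∀ b : ℕ, b ∈ S → a ≠ b →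
          k ≤ min ((a : ℤ) - b).natAbs (n - ((a : ℤ) - b).natAbs))).card)
      = (n - k + 1 - (k - 1) * (m - 1)).choose m
        + (k - 1) * (n - 2 * k + 1 - (k - 1) * (m - 2)).choose (m - 1) := by
  have hn2k : 2 * k ≤ n := by
    have : k * 2 ≤ k * m := Nat.mul_le_mul_left k hm
    omega
  set Q : Finset ℕ → Prop :=
    fun S => S.card = m ∧ ∀ a ∈ S, ∀ b ∈ S, a < b → a + k ≤ b ∧ b + k ≤ a + n with hQdef
  -- Step 1: convert the circular-distance predicate to a nat predicate
  have hA : (Finset.Icc 1 n).powerset.filter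
      (fun S => S.card = m ∧
        ∀ a : ℕ, a ∈ S → ∀ b : ℕ, b ∈ S → a ≠ b →
          k ≤ min ((a : ℤ) - b).natAbs (n - ((a : ℤ) - b).natAbs))
      = (Finset.Icc 1 n).powerset.filter Q := by
    ext S
    simp only [Finset.mem_filter, Finset.mem_powerset, hQdef]
    constructor
    · rintro ⟨hsub, hcard, h⟩
      refine ⟨hsub, hcard, ?_⟩
      intro a ha b hb hab
      have ha' := hsub ha
      have hb' := hsub hb
      simp only [Finset.mem_Icc] at ha' hb'
      have := h a ha b hb (by omega)
      rw [le_min_iff] at this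
      omega
    · rintro ⟨hsub, hcard, h⟩
      refine ⟨hsub, hcard, ?_⟩
      intro a ha b hb hab
      have ha' := hsub ha
      have hb' := hsub hb
      simp only [Finset.mem_Icc] at ha' hb'
      rw [le_min_iff]
      rcases Nat.lt_or_ge a b with hlt | hge
      · have := h a ha b hb hlt
        omega
      · have hlt : b < a := by omega
        have := h b hb a ha hlt
        omega
  rw [hA]
  -- Step 2: split according to whether all elements are ≤ n - k + 1
  have hsplit := Finset.card_filter_add_card_filter_not
    (s := (Finset.Icc 1 n).powerset.filter Q) (p := fun S => ∀ x ∈ S, x ≤ n - k + 1)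
  rw [← hsplit]
  -- Step 3: the first piece
  have h1 : (((Finset.Icc 1 n).powerset.filter Q).filter (fun S => ∀ x ∈ S, x ≤ n - k + 1))
      = (Finset.Icc (0+1) (0+(n-k+1))).powerset.filter
          (fun S => S.card = m ∧ ∀ a ∈ S, ∀ b ∈ S, a < b → a + k ≤ b) := by
    rw [Finset.filter_filter]
    ext S
    simp only [Finset.mem_filter, Finset.mem_powerset, hQdef]
    constructor
    · rintro ⟨hsub, ⟨hcard, hgap⟩, hbd⟩
      refine ⟨?_, hcard, fun a ha b hb hab => (hgap a ha b hb hab).1⟩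
      intro x hx
      have h1 := hsub hx
      have h2 := hbd x hx
      simp only [Finset.mem_Icc] at h1 ⊢
      omega
    · rintro ⟨hsub, hcard, hgap⟩
      have hbd : ∀ x ∈ S, 1 ≤ x ∧ x ≤ n - k + 1 := by
        intro x hx
        have := hsub hx
        simp only [Finset.mem_Icc] at this
        omega
      refine ⟨?_, ⟨hcard, ?_⟩, fun x hx => (hbd x hx).2⟩
      · intro x hx
        simp only [Finset.mem_Icc]
        have := hbd x hx
        omega
      · intro a ha b hb hab
        have hb' := hbd b hb
        have ha' := hbd a ha
        exact ⟨hgap a ha b hb hab, by omega⟩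
  -- Step 4: the second piece as a union over j < k-1
  have h2 : (((Finset.Icc 1 n).powerset.filter Q).filter (fun S => ¬ ∀ x ∈ S, x ≤ n - k + 1))
      = (Finset.range (k-1)).biUnion
          (fun j => ((Finset.Icc 1 n).powerset.filter Q).filter (fun S => n - j ∈ S)) := by
    ext S
    simp only [Finset.mem_filter, Finset.mem_powerset, Finset.mem_biUnion, Finset.mem_range]
    constructor
    · rintro ⟨⟨hsub, hQ⟩, hx⟩
      push_neg at hx
      obtain ⟨x, hxS, hxgt⟩ := hx
      have hxn : 1 ≤ x ∧ x ≤ n := by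
        have := hsub hxS
        simp only [Finset.mem_Icc] at this
        omega
      refine ⟨n - x, by omega, ⟨hsub, hQ⟩, ?_⟩
      have hnx : n - (n - x) = x := by omega
      rw [hnx]
      exact hxS
    · rintro ⟨j, hj, ⟨hsub, hQ⟩, hmem⟩
      refine ⟨⟨hsub, hQ⟩, ?_⟩
      push_neg
      exact ⟨n - j, hmem, by omega⟩
  -- disjointness
  have hdisj : ∀ i ∈ Finset.range (k-1), ∀ j ∈ Finset.range (k-1), i ≠ j →
      Disjoint (((Finset.Icc 1 n).powerset.filter Q).filter (fun S => n - i ∈ S))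
        (((Finset.Icc 1 n).powerset.filter Q).filter (fun S => n - j ∈ S)) := by
    intro i hi j hj hij
    simp only [Finset.mem_range] at hi hj
    rw [Finset.disjoint_left]
    intro S hSi hSj
    simp only [Finset.mem_filter, Finset.mem_powerset, hQdef] at hSi hSj
    obtain ⟨⟨hsub, hcard, hgap⟩, hi'⟩ := hSi
    obtain ⟨-, hj'⟩ := hSj
    rcases Nat.lt_or_ge (n - i) (n - j) with hlt | hge
    · have := hgap (n - i) hi' (n - j) hj' hlt
      omega
    · have hlt : n - j < n - i := by omega
      have := hgap (n - j) hj' (n - i) hi' hlt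
      omega
  -- each piece of the union has the same cardinality
  have h3 : ∀ j ∈ Finset.range (k-1),
      ((((Finset.Icc 1 n).powerset.filter Q).filter (fun S => n - j ∈ S))).card
        = (n - 2 * k + 1 - (k - 1) * (m - 2)).choose (m - 1) := by
    intro j hj
    simp only [Finset.mem_range] at hj
    have hcalc : ((((Finset.Icc 1 n).powerset.filter Q).filter (fun S => n - j ∈ S))).card
        = ((Finset.Icc ((k-j-1)+1) ((k-j-1)+(n-2*k+1))).powerset.filter
            (fun S => S.card = m-1 ∧ ∀ a ∈ S, ∀ b ∈ S, a < b → a + k ≤ b)).card := by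
      refine Finset.card_bij' (fun S _ => S.erase (n-j)) (fun T _ => insert (n-j) T)
        ?hi ?hj ?left ?right
      case hi =>
        intro S hS
        simp only [Finset.mem_filter, Finset.mem_powerset, hQdef] at hS ⊢
        obtain ⟨⟨hsub, hcard, hgap⟩, hmemnj⟩ := hS
        have hbound : ∀ x ∈ S, x ≠ n - j → k - j ≤ x ∧ x ≤ n - k - j := by
          intro x hx hxne
          have hxn : 1 ≤ x ∧ x ≤ n := by
            have := hsub hx
            simp only [Finset.mem_Icc] at this
            omega
          have hxlt : x < n - j := by
            by_contra hcon
            push_neg at hcon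
            have := hgap (n - j) hmemnj x hx (by omega)
            omega
          have := hgap x hx (n - j) hmemnj hxlt
          omega
        refine ⟨?_, ?_, ?_⟩
        · intro x hx
          have hxS := Finset.mem_of_mem_erase hx
          have hxne := Finset.ne_of_mem_erase hx
          have := hbound x hxS hxne
          simp only [Finset.mem_Icc]
          omega
        · rw [Finset.card_erase_of_mem hmemnj, hcard]
        · intro a ha b hb hab
          exact (hgap a (Finset.mem_of_mem_erase ha) b (Finset.mem_of_mem_erase hb) hab).1
      case hj =>
        intro T hT
        simp only [Finset.mem_filter, Finset.mem_powerset, hQdef] at hT ⊢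
        obtain ⟨hsub, hcard, hgap⟩ := hT
        have hbd : ∀ x ∈ T, k - j ≤ x ∧ x ≤ n - k - j := by
          intro x hx
          have := hsub hx
          simp only [Finset.mem_Icc] at this
          omega
        have hnotin : n - j ∉ T := by
          intro h
          have := hbd _ h
          omega
        refine ⟨⟨?_, ?_, ?_⟩, Finset.mem_insert_self _ _⟩
        · intro x hx
          rcases Finset.mem_insert.1 hx with rfl | hx
          · simp only [Finset.mem_Icc]; omega
          · have := hbd x hx
            simp only [Finset.mem_Icc]
            omega
        · rw [Finset.card_insert_of_notMem hnotin, hcard]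
          omega
        · intro a ha b hb hab
          rcases Finset.mem_insert.1 ha with rfl | ha
          · rcases Finset.mem_insert.1 hb with rfl | hb
            · omega
            · have := hbd b hb
              omega
          · rcases Finset.mem_insert.1 hb with rfl | hb
            · have := hbd a ha
              constructor <;> omega
            · have h1 := hbd a ha
              have h2 := hbd b hb
              exact ⟨(hgap a ha b hb hab), by omega⟩
      case left =>
        intro S hS
        simp only [Finset.mem_filter] at hS
        exact Finset.insert_erase hS.2
      case right =>
        intro T hT
        simp only [Finset.mem_filter, Finset.mem_powerset] at hT
        have hnotin : n - j ∉ T := by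
          intro h
          have := hT.1 h
          simp only [Finset.mem_Icc] at this
          omega
        exact Finset.erase_insert hnotin
    rw [hcalc, linCount k hk (k-j-1) (n-2*k+1) (m-1)]
    have hidx : m - 1 - 1 = m - 2 := by omega
    rw [hidx]
  rw [h1, linCount k hk 0 (n-k+1) m, h2, Finset.card_biUnion hdisj,
    Finset.sum_congr rfl h3, Finset.sum_const, Finset.card_range, smul_eq_mul]
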